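/- Let Y = X + V with X independent of V on ℝ^d, where the density f_V of V belongs to C_0^k(ℝ^d;ℝ) and φ_V is nonzero Lebesgue-a.e., and let g : ℝ^d → ℝ be measurable with ∫ |g| dP_X < ∞. Then the set U = {y ∈ ℝ^d : f_Y(y) > 0} is open, and the function y ↦ N_g(y)/f_Y(y), where N_g(y) = ∫ g(x) f_V(y − x) dP_X(x) and f_Y(y) = ∫ f_V(y − x) dP_X(x), is k-times continuously differentiable on U; this function is a version of the posterior mean y ↦ E[g(X) | Y = y]. -/

import Mathlib

open MeasureTheory Filter Topology

noncomputable section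

abbrev Ed (d : ℕ) := EuclideanSpace ℝ (Fin d)

/-- Integral of a complex-valued function against a finite signed measure,
via the Jordan decomposition. -/
def sInt {d : ℕ} (μ : SignedMeasure (Ed d)) (f : Ed d → ℂ) : ℂ :=
  (∫ x, f x ∂μ.toJordanDecomposition.posPart) -
    ∫ x, f x ∂μ.toJordanDecomposition.negPart

/-- Total variation norm of a finite signed measure. -/
def tvNorm {d : ℕ} (μ : SignedMeasure (Ed d)) : ℝ :=
  (μ.totalVariation Set.univ).toReal

/-- Convolution operator `K_V[μ](y) = ∫ f_V (y - x) dμ(x)`. -/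
def KV {d : ℕ} (fV : Ed d → ℝ) (μ : SignedMeasure (Ed d)) : Ed d → ℂ :=
  fun y => sInt μ fun x => (fV (y - x) : ℂ)

/-- The class of `V`-admissible mixtures `A_V = {f_V * μ : μ ∈ M(ℝ^d)}`. -/
def AV {d : ℕ} (fV : Ed d → ℝ) : Set (Ed d → ℂ) :=
  {f | ∃ μ : SignedMeasure (Ed d), f = KV fV μ}

/-- Characteristic function `φ_V(ω) = ∫ e^{i⟨ω,v⟩} f_V(v) dv` of a density. -/
def charFn {d : ℕ} (fV : Ed d → ℝ) (ω : Ed d) : ℂ :=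
  ∫ v, Complex.exp (Complex.I * ((inner ℝ ω v : ℝ) : ℂ)) * (fV v : ℂ)

/-- `f_V` is a probability density on `ℝ^d`. -/
def IsDensity {d : ℕ} (fV : Ed d → ℝ) : Prop :=
  Measurable fV ∧ (∀ v, 0 ≤ fV v) ∧ Integrable fV ∧ ∫ v, fV v = 1

open ProbabilityTheory

/-! Independence and the density of `V` give the pair `(X, Y)` the density `f_V (y - x)` with
respect to `P_X ⊗ volume`. Bayes' formula then identifies `E[g(X) | Y]` with `N_g(Y) / f_Y(Y)`:
by Fubini both sides have the same integral over every event `{Y ∈ B}`.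
For smoothness, `N_g` and `f_Y` are integrals of translates of `f_V` against finite measures;
the derivatives of `f_V` up to order `k` vanish at infinity, hence are bounded, so one may
differentiate `k` times under the integral sign. The quotient is smooth where `f_Y > 0`. -/
open scoped ENNReal

theorem exists_norm_le_of_tendsto_cocompact {α F : Type*} [TopologicalSpace α]
    [NormedAddCommGroup F] {f : α → F} (hf : Continuous f)
    (h : Tendsto (fun x => ‖f x‖) (cocompact α) (𝓝 0)) : ∃ C, ∀ x, ‖f x‖ ≤ C := by
  let f₀ : ZeroAtInftyContinuousMap α F := ⟨⟨f, hf⟩, tendsto_zero_iff_norm_tendsto_zero.mpr h⟩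
  obtain ⟨C, hC⟩ := isBounded_iff_forall_norm_le.mp f₀.isBounded_range
  exact ⟨C, fun x => hC _ ⟨x, rfl⟩⟩

universe u

section MeasureConvolution

-- `E` and `F` share a universe so that the induction on the order can replace `F` by `E →L[ℝ] F`.

variable {E F : Type u} [NormedAddCommGroup E] [MeasurableSpace E] [OpensMeasurableSpace E]
  [SecondCountableTopology E] [NormedAddCommGroup F] [NormedSpace ℝ F]
  {ν : Measure E} {g : E → ℝ} {f : E → F}

theorem integrable_smul_comp_sub (hg : Integrable g ν) (hf : Continuous f)
    (hfb : ∃ C, ∀ x, ‖f x‖ ≤ C) (y : E) : Integrable (fun x => g x • f (y - x)) ν := by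
  obtain ⟨C, hC⟩ := hfb
  refine (hg.norm.mul_const C).mono'
    (hg.1.smul (hf.comp (continuous_const.sub continuous_id)).aestronglyMeasurable)
    (.of_forall fun x => ?_)
  rw [norm_smul]
  exact mul_le_mul_of_nonneg_left (hC _) (norm_nonneg _)

theorem continuous_integral_smul_comp_sub (hg : Integrable g ν) (hf : Continuous f)
    (hfb : ∃ C, ∀ x, ‖f x‖ ≤ C) : Continuous fun y => ∫ x, g x • f (y - x) ∂ν := by
  obtain ⟨C, hC⟩ := hfb
  refine continuous_of_dominated (fun y => (integrable_smul_comp_sub hg hf ⟨C, hC⟩ y).1)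
    (fun y => .of_forall fun x => ?_) (hg.norm.mul_const C) (.of_forall fun x => ?_)
  · exact (norm_smul_le _ _).trans (mul_le_mul_of_nonneg_left (hC _) (norm_nonneg _))
  · exact (hf.comp (continuous_id.sub continuous_const)).const_smul _

variable [NormedSpace ℝ E]

theorem hasFDerivAt_integral_smul_comp_sub (hg : Integrable g ν) (hf : Differentiable ℝ f)
    (hf' : Continuous (fderiv ℝ f)) (hfb : ∃ C, ∀ x, ‖f x‖ ≤ C)
    (hf'b : ∃ C, ∀ x, ‖fderiv ℝ f x‖ ≤ C) (y : E) :
    HasFDerivAt (fun y => ∫ x, g x • f (y - x) ∂ν) (∫ x, g x • fderiv ℝ f (y - x) ∂ν) y := by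
  obtain ⟨C, hC⟩ := hf'b
  refine hasFDerivAt_integral_of_dominated_of_fderiv_le
    (F' := fun y x => g x • fderiv ℝ f (y - x)) (bound := fun x => ‖g x‖ * C)
    (Metric.ball_mem_nhds y one_pos)
    (.of_forall fun y => (integrable_smul_comp_sub hg hf.continuous hfb y).1)
    (integrable_smul_comp_sub hg hf.continuous hfb y)
    (integrable_smul_comp_sub hg hf' ⟨C, hC⟩ y).1 (.of_forall fun x y' _ => ?_)
    (hg.norm.mul_const C) (.of_forall fun x y' _ => ?_)
  · exact (norm_smul_le _ _).trans (mul_le_mul_of_nonneg_left (hC _) (norm_nonneg _))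
  · exact (((hf (y' - x)).hasFDerivAt.comp y' ((hasFDerivAt_id y').sub_const x))).const_smul
      (g x)

theorem contDiff_integral_smul_comp_sub (hg : Integrable g ν) {n : ℕ}
    (hf : ContDiff ℝ (n : ℕ∞) f) (hb : ∀ i ≤ n, ∃ C, ∀ x, ‖iteratedFDeriv ℝ i f x‖ ≤ C) :
    ContDiff ℝ (n : ℕ∞) fun y => ∫ x, g x • f (y - x) ∂ν := by
  have hb₀ : ∃ C, ∀ x, ‖f x‖ ≤ C := by simpa using hb 0 (Nat.zero_le n)
  induction n generalizing F with
  | zero => exact contDiff_zero.mpr (continuous_integral_smul_comp_sub hg hf.continuous hb₀)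
  | succ n ih =>
    obtain ⟨hfd, -, hf'⟩ := contDiff_succ_iff_fderiv.mp (by exact_mod_cast hf :
      ContDiff ℝ ((n : ℕ∞) + 1) f)
    have hb' : ∀ i ≤ n, ∃ C, ∀ x, ‖iteratedFDeriv ℝ i (fderiv ℝ f) x‖ ≤ C := fun i hi => by
      simpa only [norm_iteratedFDeriv_fderiv] using hb (i + 1) (by omega)
    have hb'₀ : ∃ C, ∀ x, ‖fderiv ℝ f x‖ ≤ C := by simpa using hb' 0 (Nat.zero_le n)
    have hderiv := hasFDerivAt_integral_smul_comp_sub hg hfd hf'.continuous hb₀ hb'₀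
    have : ContDiff ℝ ((n : ℕ∞) + 1) fun y => ∫ x, g x • f (y - x) ∂ν := by
      refine contDiff_succ_iff_fderiv.mpr ⟨fun y => (hderiv y).differentiableAt, by simp, ?_⟩
      rw [funext fun y => (hderiv y).fderiv]
      exact ih hf' hb' hb'₀
    exact_mod_cast this

end MeasureConvolution

theorem map_prodMk_add_eq_withDensity {Ω G : Type*} [MeasurableSpace Ω] [AddCommGroup G]
    [MeasurableSpace G] [MeasurableAdd₂ G] [MeasurableSub₂ G] {P : Measure Ω} [IsFiniteMeasure P]
    {X V : Ω → G} (hX : Measurable X) (hV : Measurable V) (hindep : IndepFun X V P)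
    {μ : Measure G} [SFinite μ] [μ.IsAddLeftInvariant] {ρ : G → ℝ≥0∞} (hρ : Measurable ρ)
    (hlaw : P.map V = μ.withDensity ρ) :
    P.map (fun ω => (X ω, X ω + V ω)) = ((P.map X).prod μ).withDensity fun p => ρ (p.2 - p.1) := by
  have hshear : Measurable fun p : G × G => (p.1, p.1 + p.2) :=
    measurable_fst.prodMk (measurable_fst.add measurable_snd)
  have hpair : P.map (fun ω => (X ω, V ω)) = ((P.map X).prod μ).withDensity fun p => ρ p.2 := by
    rw [(indepFun_iff_map_prod_eq_prod_map_map hX.aemeasurable hV.aemeasurable).mp hindep, hlaw,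
      prod_withDensity_right hρ]
  have hρ₂ : Measurable fun p : G × G => ρ p.2 := hρ.comp measurable_snd
  have hρ_sub : Measurable fun p : G × G => ρ (p.2 - p.1) :=
    hρ.comp (measurable_snd.sub measurable_fst)
  refine Measure.ext_of_lintegral _ fun φ hφ => ?_
  have hφ_shear : Measurable fun p : G × G => φ (p.1, p.1 + p.2) := hφ.comp hshear
  rw [show (fun ω => (X ω, X ω + V ω)) = (fun p : G × G => (p.1, p.1 + p.2)) ∘ fun ω => (X ω, V ω)
      from rfl, ← Measure.map_map hshear (hX.prodMk hV), lintegral_map hφ hshear, hpair,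
    lintegral_withDensity_eq_lintegral_mul _ hρ₂ hφ_shear,
    lintegral_withDensity_eq_lintegral_mul _ hρ_sub hφ,
    ← (measurePreserving_prod_add (P.map X) μ).lintegral_comp (hρ_sub.mul hφ)]
  simp

-- Also when `∫ w = 0`, where the division returns `0`: then `h * w = 0` a.e.
theorem integral_mul_div_integral_mul_integral {α : Type*} [MeasurableSpace α] {ν : Measure α}
    {h w : α → ℝ} (hw0 : ∀ x, 0 ≤ w x) (hw : Integrable w ν) :
    (∫ x, h x * w x ∂ν) / (∫ x, w x ∂ν) * ∫ x, w x ∂ν = ∫ x, h x * w x ∂ν := by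
  rcases (integral_nonneg (μ := ν) (f := w) hw0).eq_or_lt with hzero | hpos
  · have hw_ae : w =ᵐ[ν] 0 := (integral_eq_zero_iff_of_nonneg hw0 hw).mp hzero.symm
    rw [← hzero, mul_zero, integral_eq_zero_of_ae (hw_ae.mono fun x hx => by simp [hx])]
  · exact div_mul_cancel₀ _ hpos.ne'

-- `E[g(X) | Y = y]` when `(X, Y)` has density `q` w.r.t. `ν ⊗ μ`; for `q (x, y) = f_V (y - x)`
-- and `ν = P_X` it is `N_g(y) / f_Y(y)`.
def posteriorMean {α β : Type*} [MeasurableSpace α] (ν : Measure α) (q : α × β → ℝ) (g : α → ℝ)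
    (y : β) : ℝ :=
  (∫ x, g x * q (x, y) ∂ν) / ∫ x, q (x, y) ∂ν

section Bayes

variable {Ω α β : Type*} [MeasurableSpace Ω] [MeasurableSpace α] [MeasurableSpace β]
  {P : Measure Ω} {X : Ω → α} {Y : Ω → β} {ν : Measure α} {μ : Measure β} [SFinite ν] [SFinite μ]
  {q : α × β → ℝ}

theorem lintegral_comp_eq_lintegral_lintegral_of_map_eq_withDensity (hX : Measurable X)
    (hY : Measurable Y) (hq : Measurable q)
    (hjoint : P.map (fun ω => (X ω, Y ω)) = (ν.prod μ).withDensity fun p => .ofReal (q p))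
    {F : α × β → ℝ≥0∞} (hF : Measurable F) :
    ∫⁻ ω, F (X ω, Y ω) ∂P = ∫⁻ y, ∫⁻ x, .ofReal (q (x, y)) * F (x, y) ∂ν ∂μ := by
  rw [← lintegral_map hF (hX.prodMk hY), hjoint,
    lintegral_withDensity_eq_lintegral_mul _ hq.ennreal_ofReal hF,
    lintegral_prod_symm _ (hq.ennreal_ofReal.mul hF).aemeasurable]
  rfl

theorem integral_comp_eq_integral_integral_of_map_eq_withDensity (hX : Measurable X)
    (hY : Measurable Y) (hq : Measurable q) (hq0 : ∀ p, 0 ≤ q p)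
    (hjoint : P.map (fun ω => (X ω, Y ω)) = (ν.prod μ).withDensity fun p => .ofReal (q p))
    {F : α × β → ℝ} (hF : Measurable F) (hFint : Integrable (fun ω => F (X ω, Y ω)) P) :
    ∫ ω, F (X ω, Y ω) ∂P = ∫ y, ∫ x, q (x, y) * F (x, y) ∂ν ∂μ := by
  have hdens : ∀ p, (ENNReal.ofReal (q p)).toReal • F p = q p * F p := fun p => by
    rw [ENNReal.toReal_ofReal (hq0 p), smul_eq_mul]
  have hint : Integrable (fun p => q p * F p) (ν.prod μ) := by
    have hmap := (integrable_map_measure hF.aestronglyMeasurable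
      (hX.prodMk hY).aemeasurable).mpr hFint
    rw [hjoint, integrable_withDensity_iff_integrable_smul' hq.ennreal_ofReal
      (.of_forall fun _ => ENNReal.ofReal_lt_top)] at hmap
    simpa only [hdens] using hmap
  rw [← integral_map (hX.prodMk hY).aemeasurable hF.aestronglyMeasurable, hjoint,
    integral_withDensity_eq_integral_toReal_smul hq.ennreal_ofReal
      (.of_forall fun _ => ENNReal.ofReal_lt_top), ← integral_prod_symm _ hint]
  simp only [hdens]

theorem map_restrict_preimage_eq_withDensity (hX : Measurable X) (hY : Measurable Y)
    (hjoint : P.map (fun ω => (X ω, Y ω)) = (ν.prod μ).withDensity fun p => .ofReal (q p))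
    {B : Set β} (hB : MeasurableSet B) :
    (P.restrict (Y ⁻¹' B)).map (fun ω => (X ω, Y ω)) =
      (ν.prod (μ.restrict B)).withDensity fun p => .ofReal (q p) := by
  rw [← Measure.restrict_univ (μ := ν), Measure.prod_restrict, ← restrict_withDensity
    (MeasurableSet.univ.prod hB), ← hjoint, Measure.restrict_map (hX.prodMk hY)
    (MeasurableSet.univ.prod hB), Set.mk_preimage_prod, Set.preimage_univ, Set.univ_inter]

theorem measurable_posteriorMean (hq : Measurable q) {g : α → ℝ} (hg : Measurable g) :
    Measurable (posteriorMean ν q g) :=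
  ((hg.comp measurable_fst).mul hq).stronglyMeasurable.integral_prod_left'.measurable.div
    hq.stronglyMeasurable.integral_prod_left'.measurable

theorem integrable_posteriorMean_comp (hX : Measurable X) (hY : Measurable Y) (hq : Measurable q)
    (hq0 : ∀ p, 0 ≤ q p) (hq_int : ∀ y, Integrable (fun x => q (x, y)) ν)
    (hjoint : P.map (fun ω => (X ω, Y ω)) = (ν.prod μ).withDensity fun p => .ofReal (q p))
    {g : α → ℝ} (hg : Measurable g) (hgX : Integrable (fun ω => g (X ω)) P) :
    Integrable (fun ω => posteriorMean ν q g (Y ω)) P := by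
  have hpm := measurable_posteriorMean (ν := ν) hq hg
  refine ⟨(hpm.comp hY).aestronglyMeasurable, ?_⟩
  calc ∫⁻ ω, ‖posteriorMean ν q g (Y ω)‖ₑ ∂P
      = ∫⁻ y, ∫⁻ x, .ofReal (q (x, y)) * ‖posteriorMean ν q g y‖ₑ ∂ν ∂μ :=
        lintegral_comp_eq_lintegral_lintegral_of_map_eq_withDensity hX hY hq hjoint
          (F := fun p => ‖posteriorMean ν q g p.2‖ₑ) (hpm.comp measurable_snd).enorm
    _ = ∫⁻ y, ‖∫ x, g x * q (x, y) ∂ν‖ₑ ∂μ := lintegral_congr fun y => by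
        rw [lintegral_mul_const' _ _ enorm_ne_top,
          ← ofReal_integral_eq_lintegral_ofReal (hq_int y) (.of_forall fun x => hq0 _),
          ← Real.enorm_of_nonneg (integral_nonneg fun x => hq0 _), ← enorm_mul, mul_comm,
          posteriorMean, integral_mul_div_integral_mul_integral (fun x => hq0 _) (hq_int y)]
    _ ≤ ∫⁻ y, ∫⁻ x, .ofReal (q (x, y)) * ‖g x‖ₑ ∂ν ∂μ := lintegral_mono fun y =>
        (enorm_integral_le_lintegral_enorm _).trans_eq <| lintegral_congr fun x => by
          rw [enorm_mul, Real.enorm_of_nonneg (hq0 _), mul_comm]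
    _ = ∫⁻ ω, ‖g (X ω)‖ₑ ∂P :=
        (lintegral_comp_eq_lintegral_lintegral_of_map_eq_withDensity hX hY hq hjoint
          (F := fun p => ‖g p.1‖ₑ) (hg.comp measurable_fst).enorm).symm
    _ < ∞ := hgX.2

theorem condExp_comp_ae_eq_posteriorMean [IsFiniteMeasure P] (hX : Measurable X)
    (hY : Measurable Y) (hq : Measurable q) (hq0 : ∀ p, 0 ≤ q p)
    (hq_int : ∀ y, Integrable (fun x => q (x, y)) ν)
    (hjoint : P.map (fun ω => (X ω, Y ω)) = (ν.prod μ).withDensity fun p => .ofReal (q p))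
    {g : α → ℝ} (hg : Measurable g) (hgX : Integrable (fun ω => g (X ω)) P) :
    P[fun ω => g (X ω) | MeasurableSpace.comap Y inferInstance]
      =ᵐ[P] fun ω => posteriorMean ν q g (Y ω) := by
  have hpm := measurable_posteriorMean (ν := ν) hq hg
  have hint := integrable_posteriorMean_comp hX hY hq hq0 hq_int hjoint hg hgX
  refine (ae_eq_condExp_of_forall_setIntegral_eq hY.comap_le hgX
    (fun _ _ _ => hint.integrableOn) ?_
    (hpm.comp (Measurable.of_comap_le le_rfl)).aestronglyMeasurable).symm
  rintro _ ⟨B, hB, rfl⟩ -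
  have hjointB := map_restrict_preimage_eq_withDensity hX hY hjoint hB
  rw [integral_comp_eq_integral_integral_of_map_eq_withDensity hX hY hq hq0 hjointB
      (F := fun p => posteriorMean ν q g p.2) (hpm.comp measurable_snd) hint.restrict,
    integral_comp_eq_integral_integral_of_map_eq_withDensity hX hY hq hq0 hjointB
      (F := fun p => g p.1) (hg.comp measurable_fst) hgX.restrict]
  refine integral_congr_ae (.of_forall fun y => ?_)
  dsimp only
  rw [integral_mul_const, mul_comm, posteriorMean,
    integral_mul_div_integral_mul_integral (fun x => hq0 _) (hq_int y)]
  simp_rw [mul_comm (g _)]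

end Bayes

theorem tweedie_stmt15_general {d k : ℕ} {Ω : Type*} [MeasurableSpace Ω]
    (P : Measure Ω) [IsProbabilityMeasure P]
    (Y X V : Ω → Ed d)
    (hY : Measurable Y) (hX : Measurable X) (hV : Measurable V)
    (hadd : Y = X + V) (hindep : IndepFun X V P)
    (fV : Ed d → ℝ) (hfV : IsDensity fV)
    (hlaw : Measure.map V P = volume.withDensity fun v => ENNReal.ofReal (fV v))
    (hsm : ContDiff ℝ (k : ℕ∞) fV)
    (hdecay : ∀ n : ℕ, n ≤ k →
      Tendsto (fun x => ‖iteratedFDeriv ℝ n fV x‖) (cocompact (Ed d)) (𝓝 0))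
    (g : Ed d → ℝ) (hg : Measurable g)
    (hgint : Integrable g (Measure.map X P))
    (Ng fY : Ed d → ℝ)
    (hNg : Ng = fun z => ∫ x, g x * fV (z - x) ∂(Measure.map X P))
    (hfY : fY = fun z => ∫ x, fV (z - x) ∂(Measure.map X P)) :
    IsOpen {z : Ed d | 0 < fY z} ∧
    ContDiffOn ℝ (k : ℕ∞) (fun z => Ng z / fY z) {z : Ed d | 0 < fY z} ∧
    P[(fun ω => g (X ω))|MeasurableSpace.comap Y inferInstance]
      =ᵐ[P] fun ω => Ng (Y ω) / fY (Y ω) := by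
  obtain ⟨hfVm, hfV0, -, -⟩ := hfV
  have hbound : ∀ i ≤ k, ∃ C, ∀ x, ‖iteratedFDeriv ℝ i fV x‖ ≤ C := fun i hi =>
    exists_norm_le_of_tendsto_cocompact (hsm.continuous_iteratedFDeriv (mod_cast hi))
      (hdecay i hi)
  have hfV_bound : ∃ C, ∀ x, ‖fV x‖ ≤ C := by simpa using hbound 0 k.zero_le
  have hNg_smooth : ContDiff ℝ (k : ℕ∞) Ng := hNg ▸ contDiff_integral_smul_comp_sub hgint hsm hbound
  have hfY_smooth : ContDiff ℝ (k : ℕ∞) fY := by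
    simpa [hfY] using contDiff_integral_smul_comp_sub (integrable_const (1 : ℝ)) hsm hbound
  refine ⟨isOpen_lt continuous_const hfY_smooth.continuous,
    hNg_smooth.contDiffOn.div hfY_smooth.contDiffOn fun z hz => hz.ne', ?_⟩
  have hjoint := map_prodMk_add_eq_withDensity hX hV hindep hfVm.ennreal_ofReal hlaw
  subst hadd hNg hfY
  refine condExp_comp_ae_eq_posteriorMean hX hY (q := fun p => fV (p.2 - p.1))
    (hfVm.comp (measurable_snd.sub measurable_fst)) (fun p => hfV0 _) (fun y => ?_) hjoint hg
    ((integrable_map_measure hg.aestronglyMeasurable hX.aemeasurable).mp hgint)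
  simpa using integrable_smul_comp_sub (integrable_const (1 : ℝ)) hsm.continuous hfV_bound y

/-- **Statement 15.** Smoothness of the posterior mean: in the additive-noise
model `Y = X + V` with `X ⟂ V`, noise density `f_V ∈ C_0^k(ℝ^d;ℝ)` with a.e.
nonvanishing characteristic function, and `g` measurable and `P_X`-integrable,
the set `U = {y : f_Y(y) > 0}` is open, the ratio `y ↦ N_g(y)/f_Y(y)` is
`k`-times continuously differentiable on `U`, and this ratio is a version of
the posterior mean `E[g(X) | Y]`. -/
theorem tweedie_stmt15 {d k : ℕ} {Ω : Type*} [MeasurableSpace Ω]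
    (P : Measure Ω) [IsProbabilityMeasure P]
    (Y X V : Ω → Ed d)
    (hY : Measurable Y) (hX : Measurable X) (hV : Measurable V)
    (hadd : Y = X + V) (hindep : IndepFun X V P)
    (fV : Ed d → ℝ) (hfV : IsDensity fV)
    (hlaw : Measure.map V P = volume.withDensity fun v => ENNReal.ofReal (fV v))
    (hsm : ContDiff ℝ (k : ℕ∞) fV)
    (hdecay : ∀ n : ℕ, n ≤ k →
      Tendsto (fun x => ‖iteratedFDeriv ℝ n fV x‖) (cocompact (Ed d)) (𝓝 0))
    (hφ : ∀ᵐ ω : Ed d ∂volume, charFn fV ω ≠ 0)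
    (g : Ed d → ℝ) (hg : Measurable g)
    (hgint : Integrable g (Measure.map X P))
    (Ng fY : Ed d → ℝ)
    (hNg : Ng = fun z => ∫ x, g x * fV (z - x) ∂(Measure.map X P))
    (hfY : fY = fun z => ∫ x, fV (z - x) ∂(Measure.map X P)) :
    IsOpen {z : Ed d | 0 < fY z} ∧
    ContDiffOn ℝ (k : ℕ∞) (fun z => Ng z / fY z) {z : Ed d | 0 < fY z} ∧
    P[(fun ω => g (X ω))|MeasurableSpace.comap Y inferInstance]
      =ᵐ[P] fun ω => Ng (Y ω) / fY (Y ω) :=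
  tweedie_stmt15_general P Y X V hY hX hV hadd hindep fV hfV hlaw hsm hdecay g hg hgint Ng fY hNg
    hfY
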